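/- Every random locally convex module (E,P) that is complete in the (ε,λ)-topology has the countable concatenation property: for every countable measurable partition {Aₙ : n ∈ ℕ} of Ω and every sequence {xₙ} in E, there exists x ∈ E with 1_{Aₙ}·x = 1_{Aₙ}·xₙ for all n. -/

import Mathlib

/-! The partial concatenations `sₖ = ∑_{n<k} 1_{Aₙ} xₙ` agree on `A₀ ∪ ⋯ ∪ Aₘ` as soon as
`k > m`, and `P(A₀ ∪ ⋯ ∪ Aₘ) → 1`, so `(sₖ)` is Cauchy in the `(ε,λ)`-topology. Its limit `x`
satisfies `1_{Aₙ}(xₙ - x) = 1_{Aₙ}(sₖ - x)` for `k > n`; every seminorm of the right-hand side is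
dominated by that of `sₖ - x`, which tends to `0` in probability, so `1_{Aₙ}(xₙ - x) = 0`. -/

open MeasureTheory

section Preamble

variable {Ω : Type*} [MeasurableSpace Ω] {μ : Measure Ω}

/-- `L⁰(F,𝕜)` is a commutative ring under the pointwise operations. -/
noncomputable instance L0.instCommRing {𝕜 : Type*} [RCLike 𝕜] : CommRing (Ω →ₘ[μ] 𝕜) :=
  { (inferInstance : AddCommGroup (Ω →ₘ[μ] 𝕜)),
    (inferInstance : CommMonoid (Ω →ₘ[μ] 𝕜)) with
    left_distrib := fun f g h => AEEqFun.toGerm_injective <| by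
      simp only [AEEqFun.mul_toGerm, AEEqFun.add_toGerm, mul_add]
    right_distrib := fun f g h => AEEqFun.toGerm_injective <| by
      simp only [AEEqFun.mul_toGerm, AEEqFun.add_toGerm, add_mul]
    zero_mul := fun f => AEEqFun.toGerm_injective <| by
      simp only [AEEqFun.mul_toGerm, AEEqFun.zero_toGerm, zero_mul]
    mul_zero := fun f => AEEqFun.toGerm_injective <| by
      simp only [AEEqFun.mul_toGerm, AEEqFun.zero_toGerm, mul_zero] }

/-- The indicator function of a measurable set `A`, as an element of `L⁰(F,𝕜)`. -/
noncomputable def L0.ind (μ : Measure Ω) (𝕜 : Type*) [RCLike 𝕜] (A : Set Ω)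
    (_hA : MeasurableSet A) : Ω →ₘ[μ] 𝕜 :=
  AEEqFun.mk (A.indicator fun _ => (1 : 𝕜))
    (stronglyMeasurable_const.indicator _hA).aestronglyMeasurable

/-- The pointwise modulus `|ξ|` of an element of `L⁰(F,𝕜)`, as an element of `L⁰(F,ℝ)`. -/
noncomputable def L0.abs {𝕜 : Type*} [RCLike 𝕜] (ξ : Ω →ₘ[μ] 𝕜) : Ω →ₘ[μ] ℝ :=
  AEEqFun.comp (fun z => ‖z‖) continuous_norm ξ

/-- An element of `L⁰(F,ℝ)` is strictly positive on `Ω`, i.e. lies in `L⁰₊₊`. -/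
def L0.StrPos (ξ : Ω →ₘ[μ] ℝ) : Prop := ∀ᵐ ω ∂μ, 0 < ξ ω

/-- A countable measurable partition of `Ω`. -/
structure IsMeasPartition {Ω : Type*} [MeasurableSpace Ω] (A : ℕ → Set Ω) : Prop where
  meas : ∀ n, MeasurableSet (A n)
  disj : Pairwise (Function.onFun Disjoint A)
  cover : (⋃ n, A n) = Set.univ

variable {𝕜 : Type*} [RCLike 𝕜] {E : Type*} [AddCommGroup E] [Module (Ω →ₘ[μ] 𝕜) E]
  {ι : Type*}

/-- `(E, ν)` is a random locally convex module over `𝕜` with base `(Ω,F,P)`: `ν` is a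
separating family of `L⁰`-seminorms on the `L⁰(F,𝕜)`-module `E`. -/
structure IsRLCModule (𝕜 : Type*) [RCLike 𝕜] {Ω : Type*} [MeasurableSpace Ω] {μ : Measure Ω}
    {E : Type*} [AddCommGroup E] [Module (Ω →ₘ[μ] 𝕜) E] {ι : Type*} (ν : ι → E → Ω →ₘ[μ] ℝ) : Prop where
  nonneg : ∀ i x, 0 ≤ ν i x
  smul : ∀ i (ξ : Ω →ₘ[μ] 𝕜) x, ν i (ξ • x) = L0.abs ξ * ν i x
  add_le : ∀ i x y, ν i (x + y) ≤ ν i x + ν i y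
  separating : ∀ x, (∀ i, ν i x = 0) → x = 0

/-- `(E, n)` is a random normed module over `𝕜` with base `(Ω,F,P)`. -/
structure IsRNModule (𝕜 : Type*) [RCLike 𝕜] {Ω : Type*} [MeasurableSpace Ω] {μ : Measure Ω}
    {E : Type*} [AddCommGroup E] [Module (Ω →ₘ[μ] 𝕜) E] (n : E → Ω →ₘ[μ] ℝ) : Prop where
  nonneg : ∀ x, 0 ≤ n x
  smul : ∀ (ξ : Ω →ₘ[μ] 𝕜) x, n (ξ • x) = L0.abs ξ * n x
  add_le : ∀ x y, n (x + y) ≤ n x + n y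
  definite : ∀ x, n x = 0 → x = 0

/-- `‖x‖_Q`, the `L⁰`-seminorm associated with a finite nonempty subfamily `Q ⊆ P`. -/
noncomputable def nQ (ν : ι → E → Ω →ₘ[μ] ℝ) (Q : Finset ι) (hQ : Q.Nonempty) (x : E) :
    Ω →ₘ[μ] ℝ :=
  Q.sup' hQ fun i => ν i x

/-- The neighbourhood filter of a point in the locally `L⁰`-convex topology `T_c`,
generated by the balls `x + B_Q(ε)` with `Q` finite and `ε ∈ L⁰₊₊`. -/
noncomputable def tcNhd (ν : ι → E → Ω →ₘ[μ] ℝ) (x : E) : Filter E :=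
  ⨅ (Q : {Q : Finset ι // Q.Nonempty}) (ε : {ε : Ω →ₘ[μ] ℝ // L0.StrPos ε}),
    Filter.principal {y | nQ ν Q.1 Q.2 (y - x) ≤ ε.1}

/-- The locally `L⁰`-convex topology `T_c` on `E` induced by the family `ν`. -/
noncomputable def tcTop (ν : ι → E → Ω →ₘ[μ] ℝ) : TopologicalSpace E :=
  .mkOfNhds (tcNhd ν)

/-- The neighbourhood filter of a point in the `(ε,λ)`-topology, generated by the
neighbourhoods `x + N(Q,ε,λ)`. -/
noncomputable def elNhd (ν : ι → E → Ω →ₘ[μ] ℝ) (x : E) : Filter E :=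
  ⨅ (Q : {Q : Finset ι // Q.Nonempty}) (e : {e : ℝ // 0 < e}) (l : {l : ℝ // 0 < l ∧ l < 1}),
    Filter.principal {y | (μ {ω | nQ ν Q.1 Q.2 (y - x) ω < e.1}).toReal > 1 - l.1}

/-- The `(ε,λ)`-topology on `E` induced by the family `ν`. -/
noncomputable def elTop (ν : ι → E → Ω →ₘ[μ] ℝ) : TopologicalSpace E :=
  .mkOfNhds (elNhd ν)

/-- A net (indexed by a directed preordered type) is Cauchy in the `(ε,λ)`-topology. -/
def ElCauchy (ν : ι → E → Ω →ₘ[μ] ℝ) {J : Type*} [Preorder J] (u : J → E) : Prop :=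
  ∀ (Q : Finset ι) (hQ : Q.Nonempty) (e l : ℝ), 0 < e → 0 < l → l < 1 →
    ∃ j₀, ∀ j k, j₀ ≤ j → j₀ ≤ k →
      (μ {ω | nQ ν Q hQ (u j - u k) ω < e}).toReal > 1 - l

/-- A net converges to `x` in the `(ε,λ)`-topology. -/
def ElLim (ν : ι → E → Ω →ₘ[μ] ℝ) {J : Type*} [Preorder J] (u : J → E) (x : E) : Prop :=
  ∀ (Q : Finset ι) (hQ : Q.Nonempty) (e l : ℝ), 0 < e → 0 < l → l < 1 →
    ∃ j₀, ∀ j, j₀ ≤ j → (μ {ω | nQ ν Q hQ (u j - x) ω < e}).toReal > 1 - l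

/-- `E` is complete in the `(ε,λ)`-topology: every Cauchy net converges. -/
def ElComplete (ν : ι → E → Ω →ₘ[μ] ℝ) : Prop :=
  ∀ (J : Type*) (_ : Preorder J) (_ : IsDirected J (· ≤ ·)) (_ : Nonempty J) (u : J → E),
    ElCauchy ν u → ∃ x, ElLim ν u x

/-- A net is Cauchy in the locally `L⁰`-convex topology `T_c`. -/
def TcCauchy (ν : ι → E → Ω →ₘ[μ] ℝ) {J : Type*} [Preorder J] (u : J → E) : Prop :=
  ∀ (Q : Finset ι) (hQ : Q.Nonempty) (ε : Ω →ₘ[μ] ℝ), L0.StrPos ε →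
    ∃ j₀, ∀ j k, j₀ ≤ j → j₀ ≤ k → nQ ν Q hQ (u j - u k) ≤ ε

/-- A net converges to `x` in the locally `L⁰`-convex topology `T_c`. -/
def TcLim (ν : ι → E → Ω →ₘ[μ] ℝ) {J : Type*} [Preorder J] (u : J → E) (x : E) : Prop :=
  ∀ (Q : Finset ι) (hQ : Q.Nonempty) (ε : Ω →ₘ[μ] ℝ), L0.StrPos ε →
    ∃ j₀, ∀ j, j₀ ≤ j → nQ ν Q hQ (u j - x) ≤ ε

/-- `E` is complete in the locally `L⁰`-convex topology: every Cauchy net converges. -/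
def TcComplete (ν : ι → E → Ω →ₘ[μ] ℝ) : Prop :=
  ∀ (J : Type*) (_ : Preorder J) (_ : IsDirected J (· ≤ ·)) (_ : Nonempty J) (u : J → E),
    TcCauchy ν u → ∃ x, TcLim ν u x

/-- A subset `G` of the `L⁰(F,𝕜)`-module `E` has the countable concatenation property:
every countable concatenation of elements of `G` is well defined and lies in `G`. -/
def HasCCP (μ : Measure Ω) (𝕜 : Type*) [RCLike 𝕜] {E : Type*} [AddCommGroup E]
    [Module (Ω →ₘ[μ] 𝕜) E] (G : Set E) : Prop :=
  ∀ (A : ℕ → Set Ω) (hA : IsMeasPartition A) (x : ℕ → E), (∀ n, x n ∈ G) →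
    ∃ x₀ ∈ G, ∀ n, L0.ind μ 𝕜 (A n) (hA.meas n) • x₀ = L0.ind μ 𝕜 (A n) (hA.meas n) • x n

end Preamble

open Set Filter

namespace L0

variable {Ω : Type*} [MeasurableSpace Ω] {μ : Measure Ω} {𝕜 : Type*} [RCLike 𝕜]

lemma coeFn_ind (A : Set Ω) (hA : MeasurableSet A) :
    (ind μ 𝕜 A hA : Ω → 𝕜) =ᵐ[μ] A.indicator 1 :=
  AEEqFun.coeFn_mk _ _

lemma ind_congr {A B : Set Ω} (hAB : A = B) (hA : MeasurableSet A) (hB : MeasurableSet B) :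
    ind μ 𝕜 A hA = ind μ 𝕜 B hB := by
  subst hAB; rfl

lemma ind_empty : ind μ 𝕜 ∅ MeasurableSet.empty = 0 := by
  simp only [ind, indicator_empty]
  rfl

lemma ind_mul_ind {A B : Set Ω} (hA : MeasurableSet A) (hB : MeasurableSet B) :
    ind μ 𝕜 A hA * ind μ 𝕜 B hB = ind μ 𝕜 (A ∩ B) (hA.inter hB) := by
  simp only [ind, AEEqFun.mk_mul_mk]
  congr 1
  exact (inter_indicator_one (s := A) (t := B)).symm

lemma ind_mul_self {A : Set Ω} (hA : MeasurableSet A) :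
    ind μ 𝕜 A hA * ind μ 𝕜 A hA = ind μ 𝕜 A hA := by
  rw [ind_mul_ind, ind_congr (inter_self A)]

lemma ind_mul_ind_of_disjoint {A B : Set Ω} (hA : MeasurableSet A) (hB : MeasurableSet B)
    (hAB : Disjoint A B) : ind μ 𝕜 A hA * ind μ 𝕜 B hB = 0 := by
  rw [ind_mul_ind, ind_congr hAB.inter_eq _ MeasurableSet.empty, ind_empty]

lemma abs_ind {A : Set Ω} (hA : MeasurableSet A) : abs (ind μ 𝕜 A hA) = ind μ ℝ A hA := by
  simp only [abs, ind, AEEqFun.comp_mk]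
  congr 1
  ext ω
  by_cases h : ω ∈ A <;> simp [h]

lemma abs_zero : abs (0 : Ω →ₘ[μ] 𝕜) = 0 := by
  rw [← ind_empty (μ := μ) (𝕜 := 𝕜), abs_ind, ind_empty]

lemma ind_mul_le {A : Set Ω} (hA : MeasurableSet A) {f : Ω →ₘ[μ] ℝ} (hf : 0 ≤ f) :
    ind μ ℝ A hA * f ≤ f := by
  rw [← AEEqFun.coeFn_le] at hf ⊢
  filter_upwards [AEEqFun.coeFn_mul (ind μ ℝ A hA) f, coeFn_ind (𝕜 := ℝ) A hA, hf,
    AEEqFun.coeFn_zero (β := ℝ) (μ := μ)] with ω hmul hind hf0 h0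
  rw [hmul, Pi.mul_apply, hind]
  by_cases h : ω ∈ A <;> simp_all

lemma ae_eq_zero_of_ind_mul_eq_zero {A : Set Ω} (hA : MeasurableSet A) {f : Ω →ₘ[μ] ℝ}
    (h : ind μ ℝ A hA * f = 0) : ∀ᵐ ω ∂μ, ω ∈ A → f ω = 0 := by
  filter_upwards [AEEqFun.coeFn_mul (ind μ ℝ A hA) f, coeFn_ind (𝕜 := ℝ) A hA,
    AEEqFun.coeFn_zero (β := ℝ) (μ := μ)] with ω hmul hind h0 hω
  have hzero : (ind μ ℝ A hA * f) ω = 0 := by rw [h]; exact h0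
  simpa [hmul, hind, hω] using hzero

end L0

section Probability

variable {Ω : Type*} [MeasurableSpace Ω] {μ : Measure Ω} [IsProbabilityMeasure μ]

lemma eventually_toReal_measure_accumulate_gt {A : ℕ → Set Ω} (hA : ⋃ n, A n = univ)
    {l : ℝ} (hl : 0 < l) : ∀ᶠ m in atTop, 1 - l < (μ (accumulate A m)).toReal := by
  have h := tendsto_measure_iUnion_atTop (μ := μ) (monotone_accumulate (s := A))
  rw [iUnion_accumulate, hA, measure_univ] at h
  exact ((ENNReal.tendsto_toReal ENNReal.one_ne_top).comp h).eventually_const_lt (by simp [hl])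

lemma ae_mem_of_forall_toReal_measure_gt {S : Set Ω} (hS : NullMeasurableSet S μ)
    (h : ∀ l : ℝ, 0 < l → l < 1 → 1 - l < (μ S).toReal) : ∀ᵐ ω ∂μ, ω ∈ S := by
  refine (ae_iff_measure_eq (p := (· ∈ S)) hS).2 ?_
  rw [ofPred_mem_eq, measure_univ]
  refine le_antisymm prob_le_one ?_
  rw [← ENNReal.toReal_le_toReal ENNReal.one_ne_top (measure_ne_top μ S),
    ENNReal.toReal_one]
  by_contra! hlt
  have := h ((1 - (μ S).toReal) / 2) (by linarith) (by linarith [ENNReal.toReal_nonneg (a := μ S)])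
  linarith

end Probability

lemma MeasureTheory.AEEqFun.le_zero_of_forall_ae_lt {Ω : Type*} [MeasurableSpace Ω]
    {μ : Measure Ω} {g : Ω →ₘ[μ] ℝ} (h : ∀ e : ℝ, 0 < e → ∀ᵐ ω ∂μ, g ω < e) : g ≤ 0 := by
  rw [← AEEqFun.coeFn_le]
  have hall : ∀ᵐ ω ∂μ, ∀ m : ℕ, g ω < 1 / (m + 1) := ae_all_iff.2 fun m => h _ (by positivity)
  filter_upwards [hall, AEEqFun.coeFn_zero (β := ℝ) (μ := μ)] with ω hω h0
  rw [h0]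
  exact le_of_forall_pos_lt_add fun e he => by
    obtain ⟨m, hm⟩ := exists_nat_one_div_lt he
    simpa using (hω m).trans hm

section nQ

variable {Ω : Type*} [MeasurableSpace Ω] {μ : Measure Ω} {E : Type*} {ι : Type*}
  {ν : ι → E → Ω →ₘ[μ] ℝ}

lemma nQ_singleton (i : ι) (y : E) : nQ ν {i} (Finset.singleton_nonempty i) y = ν i y :=
  Finset.sup'_singleton _

lemma nQ_ae_lt {Q : Finset ι} (hQ : Q.Nonempty) {y : E} {C : Set Ω} {e : ℝ}
    (h : ∀ i ∈ Q, ∀ᵐ ω ∂μ, ω ∈ C → ν i y ω < e) : ∀ᵐ ω ∂μ, ω ∈ C → nQ ν Q hQ y ω < e := by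
  refine Finset.sup'_induction hQ (fun i => ν i y) (p := fun g => ∀ᵐ ω ∂μ, ω ∈ C → g ω < e)
    (fun f hf g hg => ?_) h
  filter_upwards [hf, hg, AEEqFun.coeFn_sup f g] with ω hfω hgω hsup hω
  rw [hsup]
  exact max_lt (hfω hω) (hgω hω)

end nQ

section Seminorms

variable {Ω : Type*} [MeasurableSpace Ω] {μ : Measure Ω} {𝕜 : Type*} [RCLike 𝕜] {E : Type*}
  [AddCommGroup E] [Module (Ω →ₘ[μ] 𝕜) E] {ι : Type*} {ν : ι → E → Ω →ₘ[μ] ℝ}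

lemma IsRLCModule.map_zero (hν : IsRLCModule 𝕜 ν) (i : ι) : ν i 0 = 0 := by
  simpa only [smul_zero, L0.abs_zero, zero_mul] using hν.smul i 0 0

lemma IsRLCModule.ind_smul_le (hν : IsRLCModule 𝕜 ν) {C : Set Ω} (hC : MeasurableSet C) (i : ι)
    (y : E) : ν i (L0.ind μ 𝕜 C hC • y) ≤ ν i y := by
  rw [hν.smul, L0.abs_ind]
  exact L0.ind_mul_le hC (hν.nonneg i y)

lemma IsRLCModule.ae_eq_zero_of_ind_smul_eq_zero (hν : IsRLCModule 𝕜 ν) {C : Set Ω}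
    (hC : MeasurableSet C) {y : E} (h : L0.ind μ 𝕜 C hC • y = 0) (i : ι) :
    ∀ᵐ ω ∂μ, ω ∈ C → ν i y ω = 0 :=
  L0.ae_eq_zero_of_ind_mul_eq_zero hC (by rw [← L0.abs_ind (𝕜 := 𝕜), ← hν.smul, h, hν.map_zero])

end Seminorms

lemma ElComplete.exists_elLim_nat {Ω : Type*} [MeasurableSpace Ω] {μ : Measure Ω} {E : Type*}
    [AddCommGroup E] {ι : Type*} {ν : ι → E → Ω →ₘ[μ] ℝ} (hcomp : ElComplete ν) (u : ℕ → E)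
    (hu : ElCauchy ν u) : ∃ x, ElLim ν u x := by
  obtain ⟨x, hx⟩ := hcomp (ULift ℕ) inferInstance inferInstance inferInstance (u ∘ ULift.down)
    fun Q hQ e l he hl hl₁ =>
      let ⟨j₀, h⟩ := hu Q hQ e l he hl hl₁
      ⟨⟨j₀⟩, fun j k => h j.down k.down⟩
  exact ⟨x, fun Q hQ e l he hl hl₁ =>
    let ⟨j₀, h⟩ := hx Q hQ e l he hl hl₁
    ⟨j₀.down, fun j hj => h ⟨j⟩ hj⟩⟩

section Concatenation

variable {Ω : Type*} [MeasurableSpace Ω] (μ : Measure Ω) (𝕜 : Type*) [RCLike 𝕜] {E : Type*}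
  [AddCommGroup E] [Module (Ω →ₘ[μ] 𝕜) E] {A : ℕ → Set Ω}

noncomputable def concatSum (hA : IsMeasPartition A) (x : ℕ → E) (k : ℕ) : E :=
  ∑ n ∈ Finset.range k, L0.ind μ 𝕜 (A n) (hA.meas n) • x n

variable {μ 𝕜}

lemma ind_smul_concatSum (hA : IsMeasPartition A) (x : ℕ → E) {n k : ℕ} (hnk : n < k) :
    L0.ind μ 𝕜 (A n) (hA.meas n) • concatSum μ 𝕜 hA x k = L0.ind μ 𝕜 (A n) (hA.meas n) • x n := by
  rw [concatSum, Finset.smul_sum, Finset.sum_eq_single_of_mem n (Finset.mem_range.2 hnk),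
    smul_smul, L0.ind_mul_self]
  intro m _ hmn
  rw [smul_smul, L0.ind_mul_ind_of_disjoint _ _ (hA.disj hmn.symm), zero_smul]

variable [IsProbabilityMeasure μ] {ι : Type*} {ν : ι → E → Ω →ₘ[μ] ℝ}

lemma concatSum_elCauchy (hν : IsRLCModule 𝕜 ν) (hA : IsMeasPartition A) (x : ℕ → E) :
    ElCauchy ν (concatSum μ 𝕜 hA x) := by
  intro Q hQ e l he hl _
  obtain ⟨m, hm⟩ := (eventually_toReal_measure_accumulate_gt (μ := μ) hA.cover hl).exists
  refine ⟨m + 1, fun j k hj hk => hm.trans_le ?_⟩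
  set y := concatSum μ 𝕜 hA x j - concatSum μ 𝕜 hA x k
  have hvanish : ∀ n ≤ m, L0.ind μ 𝕜 (A n) (hA.meas n) • y = 0 := fun n hn => by
    rw [smul_sub, ind_smul_concatSum hA x (by omega), ind_smul_concatSum hA x (by omega),
      sub_self]
  refine ENNReal.toReal_mono (measure_ne_top _ _) (measure_mono_ae (nQ_ae_lt hQ fun i _ => ?_))
  filter_upwards [(finite_Iic m).eventually_all.2 fun n hn =>
    hν.ae_eq_zero_of_ind_smul_eq_zero (hA.meas n) (hvanish n hn) i] with ω hω hmem
  obtain ⟨n, hn, hωn⟩ := mem_accumulate.1 hmem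
  rw [hω n hn hωn]
  exact he

lemma ind_smul_eq_of_elLim (hν : IsRLCModule 𝕜 ν) (hA : IsMeasPartition A) (x : ℕ → E) {x₀ : E}
    (hlim : ElLim ν (concatSum μ 𝕜 hA x) x₀) (n : ℕ) :
    L0.ind μ 𝕜 (A n) (hA.meas n) • x₀ = L0.ind μ 𝕜 (A n) (hA.meas n) • x n := by
  refine (sub_eq_zero.1 ?_).symm
  rw [← smul_sub]
  refine hν.separating _ fun i => le_antisymm ?_ (hν.nonneg i _)
  set g := ν i (L0.ind μ 𝕜 (A n) (hA.meas n) • (x n - x₀))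
  refine AEEqFun.le_zero_of_forall_ae_lt fun e he => ae_mem_of_forall_toReal_measure_gt
    (S := {ω | g ω < e}) (nullMeasurableSet_lt g.aemeasurable aemeasurable_const)
    fun l hl hl₁ => ?_
  obtain ⟨k₀, hk₀⟩ := hlim {i} (Finset.singleton_nonempty i) e l he hl hl₁
  set k := max k₀ (n + 1)
  have hbound : g ≤ ν i (concatSum μ 𝕜 hA x k - x₀) :=
    calc g = ν i (L0.ind μ 𝕜 (A n) (hA.meas n) • (concatSum μ 𝕜 hA x k - x₀)) := by
          rw [smul_sub, ind_smul_concatSum hA x (by omega), ← smul_sub]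
      _ ≤ _ := hν.ind_smul_le _ _ _
  have hk := hk₀ k (le_max_left _ _)
  rw [nQ_singleton] at hk
  refine hk.trans_le (ENNReal.toReal_mono (measure_ne_top _ _) (measure_mono_ae ?_))
  filter_upwards [AEEqFun.coeFn_le.2 hbound] with ω hω hlt
  exact hω.trans_lt hlt

end Concatenation

/-- **Example 3.7.** Every random locally convex module `(E,P)` that is complete in the
`(ε,λ)`-topology has the countable concatenation property: for every countable measurable
partition `{Aₙ}` of `Ω` and every sequence `{xₙ}` in `E` there is `x ∈ E` with
`1_{Aₙ}·x = 1_{Aₙ}·xₙ` for every `n`. -/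
theorem ccp_of_elComplete {Ω : Type*} [MeasurableSpace Ω] {μ : Measure Ω}
    [IsProbabilityMeasure μ] {𝕜 : Type*} [RCLike 𝕜] {E : Type*} [AddCommGroup E]
    [Module (Ω →ₘ[μ] 𝕜) E] {ι : Type*} (ν : ι → E → Ω →ₘ[μ] ℝ) (hν : IsRLCModule 𝕜 ν)
    (hcomp : ElComplete ν) : HasCCP μ 𝕜 (Set.univ : Set E) := by
  intro A hA x _
  obtain ⟨x₀, hx₀⟩ := hcomp.exists_elLim_nat _ (concatSum_elCauchy hν hA x)
  exact ⟨x₀, mem_univ _, ind_smul_eq_of_elLim hν hA x hx₀⟩
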